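/- Assume w is exponentially bounded. Let rho_c in (0,infinity)^2 lie in D_rho with mu_c = Mbar(rho_c) (so R(mu_c) = rho_c), and suppose mu_c lies in the topological boundary of dom z (equivalently rho_c lies in the relative boundary of D_rho in (0,infinity)^2). Then for every rho in (0,infinity)^2 the following are equivalent: (i) Mbar(rho) = mu_c, i.e. the unique maximizer in D_mu of mu -> rho·mu - p(mu) is mu_c; (ii) rho belongs to the subgradient of p at mu_c, i.e. p(mu) >= p(mu_c) + rho·(mu - mu_c) for all mu in dom z. -/
import Mathlib


open Real Set Filter Topology

noncomputable section

/-- Euclidean norm `|k|` of a pair of naturals. -/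
def knorm (k : ℕ × ℕ) : ℝ := Real.sqrt ((k.1 : ℝ) ^ 2 + (k.2 : ℝ) ^ 2)

/-- Dot product `μ·k` of a chemical potential with an occupation vector. -/
def dotNat (μ : ℝ × ℝ) (k : ℕ × ℕ) : ℝ := μ.1 * k.1 + μ.2 * k.2

/-- Summand `w(k) exp(μ·k)` of the grand-canonical partition function. -/
def zsummand (w : ℕ × ℕ → ℝ) (μ : ℝ × ℝ) (k : ℕ × ℕ) : ℝ := w k * Real.exp (dotNat μ k)

/-- `dom z`: the set of `μ` where `z(μ) = ∑_k w(k) exp(μ·k)` is finite. -/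
def domz (w : ℕ × ℕ → ℝ) : Set (ℝ × ℝ) := {μ | Summable (zsummand w μ)}

/-- `D_μ`: the set of `μ` where `∑_k k_i w(k) exp(μ·k)` is finite for `i = 1,2`. -/
def Dmu (w : ℕ × ℕ → ℝ) : Set (ℝ × ℝ) :=
  {μ | Summable (fun k : ℕ × ℕ => (k.1 : ℝ) * zsummand w μ k) ∧
       Summable (fun k : ℕ × ℕ => (k.2 : ℝ) * zsummand w μ k)}

/-- `w` is exponentially bounded: `w(k) ≤ ξ^|k|` for some `ξ > 0`. -/
def ExpBounded (w : ℕ × ℕ → ℝ) : Prop := ∃ ξ : ℝ, 0 < ξ ∧ ∀ k : ℕ × ℕ, w k ≤ ξ ^ knorm k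

/-- The grand-canonical partition function `z(μ)`. -/
def zfun (w : ℕ × ℕ → ℝ) (μ : ℝ × ℝ) : ℝ := ∑' k : ℕ × ℕ, zsummand w μ k

/-- The pressure `p(μ) = log z(μ)`. -/
def press (w : ℕ × ℕ → ℝ) (μ : ℝ × ℝ) : ℝ := Real.log (zfun w μ)

/-- The single-site grand-canonical mass function `ν¹_μ(k) = w(k) exp(μ·k)/z(μ)`. -/
def nu1 (w : ℕ × ℕ → ℝ) (μ : ℝ × ℝ) (k : ℕ × ℕ) : ℝ := zsummand w μ k / zfun w μ

/-- Density of the first species `R₁(μ)`. -/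
def R1 (w : ℕ × ℕ → ℝ) (μ : ℝ × ℝ) : ℝ := ∑' k : ℕ × ℕ, (k.1 : ℝ) * nu1 w μ k

/-- Density of the second species `R₂(μ)`. -/
def R2 (w : ℕ × ℕ → ℝ) (μ : ℝ × ℝ) : ℝ := ∑' k : ℕ × ℕ, (k.2 : ℝ) * nu1 w μ k

/-- The density map `R(μ) = (R₁(μ), R₂(μ))`. -/
def Rmap (w : ℕ × ℕ → ℝ) (μ : ℝ × ℝ) : ℝ × ℝ := (R1 w μ, R2 w μ)

/-- Dot product of two real vectors. -/
def dotR (a b : ℝ × ℝ) : ℝ := a.1 * b.1 + a.2 * b.2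

lemma zsummand_pos (w : ℕ × ℕ → ℝ) (hw : ∀ k, 0 < w k) (μ : ℝ × ℝ) (k : ℕ × ℕ) :
    0 < zsummand w μ k := mul_pos (hw k) (Real.exp_pos _)

lemma Dmu_subset_domz (w : ℕ × ℕ → ℝ) (hw : ∀ k, 0 < w k) : Dmu w ⊆ domz w := by
  rintro μ ⟨h1, h2⟩
  have hsingle : Summable (fun k : ℕ × ℕ =>
      if k = ((0, 0) : ℕ × ℕ) then zsummand w μ ((0, 0) : ℕ × ℕ) else 0) :=
    (hasSum_ite_eq ((0, 0) : ℕ × ℕ) (zsummand w μ ((0, 0) : ℕ × ℕ))).summable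
  refine Summable.of_nonneg_of_le (fun k => (zsummand_pos w hw μ k).le) ?_
    ((h1.add h2).add hsingle)
  · intro k
    by_cases hk : k = ((0, 0) : ℕ × ℕ)
    · subst hk
      simp
    · have hpos := zsummand_pos w hw μ k
      have hk1 : 1 ≤ (k.1 : ℝ) + (k.2 : ℝ) := by
        have : 1 ≤ k.1 + k.2 := by
          rcases Nat.eq_zero_or_pos (k.1 + k.2) with h | h
          · exfalso; apply hk
            have := Nat.add_eq_zero.mp h
            exact Prod.ext this.1 this.2
          · exact h
        exact_mod_cast this
      simp only [hk, if_false, add_zero]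
      nlinarith

lemma shift_mem_Dmu (w : ℕ × ℕ → ℝ) (hw : ∀ k, 0 < w k) {μ : ℝ × ℝ} (hμ : μ ∈ domz w)
    {δ : ℝ} (hδ : 0 < δ) : ((μ.1 - δ, μ.2 - δ) : ℝ × ℝ) ∈ Dmu w := by
  have key : ∀ k : ℕ × ℕ, ∀ m : ℕ, m ≤ k.1 + k.2 →
      (m : ℝ) * zsummand w (μ.1 - δ, μ.2 - δ) k ≤ (1 / δ) * zsummand w μ k := by
    intro k m hm
    have hz : zsummand w (μ.1 - δ, μ.2 - δ) k
        = zsummand w μ k * Real.exp (-(δ * ((k.1 : ℝ) + (k.2 : ℝ)))) := by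
      simp only [zsummand, dotNat]
      rw [mul_assoc, ← Real.exp_add]
      ring_nf
    rw [hz]
    have hzpos := zsummand_pos w hw μ k
    rcases Nat.eq_zero_or_pos m with hm0 | hm0
    · subst hm0
      simp only [Nat.cast_zero, zero_mul]
      positivity
    · have hmpos : (0 : ℝ) < m := by exact_mod_cast hm0
      have hmk : (m : ℝ) ≤ (k.1 : ℝ) + (k.2 : ℝ) := by
        have : (m : ℝ) ≤ ((k.1 + k.2 : ℕ) : ℝ) := by exact_mod_cast hm
        simpa using this
      have hbound : (m : ℝ) * Real.exp (-(δ * ((k.1 : ℝ) + (k.2 : ℝ)))) ≤ 1 / δ := by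
        have h1 : Real.exp (-(δ * ((k.1 : ℝ) + (k.2 : ℝ)))) ≤ Real.exp (-(δ * m)) := by
          apply Real.exp_le_exp.mpr
          nlinarith
        have h2 : δ * (m : ℝ) ≤ Real.exp (δ * m) := by
          nlinarith [Real.add_one_le_exp (δ * (m : ℝ))]
        have h3 : (m : ℝ) * Real.exp (-(δ * m)) ≤ 1 / δ := by
          rw [Real.exp_neg]
          rw [mul_inv_le_iff₀ (Real.exp_pos _), div_mul_eq_mul_div, le_div_iff₀ hδ]
          nlinarith
        calc (m : ℝ) * Real.exp (-(δ * ((k.1 : ℝ) + (k.2 : ℝ))))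
            ≤ (m : ℝ) * Real.exp (-(δ * m)) := by nlinarith
          _ ≤ 1 / δ := h3
      calc (m : ℝ) * (zsummand w μ k * Real.exp (-(δ * ((k.1 : ℝ) + (k.2 : ℝ)))))
          = ((m : ℝ) * Real.exp (-(δ * ((k.1 : ℝ) + (k.2 : ℝ))))) * zsummand w μ k := by ring
        _ ≤ (1 / δ) * zsummand w μ k := by nlinarith
  have hsum : Summable (fun k : ℕ × ℕ => (1 / δ) * zsummand w μ k) := hμ.mul_left _
  constructor
  · exact Summable.of_nonneg_of_le
      (fun k => mul_nonneg (Nat.cast_nonneg _) (zsummand_pos w hw _ k).le)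
      (fun k => key k k.1 (Nat.le_add_right _ _)) hsum
  · exact Summable.of_nonneg_of_le
      (fun k => mul_nonneg (Nat.cast_nonneg _) (zsummand_pos w hw _ k).le)
      (fun k => key k k.2 (Nat.le_add_left _ _)) hsum

lemma zfun_pos (w : ℕ × ℕ → ℝ) (hw : ∀ k, 0 < w k) {μ : ℝ × ℝ} (hμ : μ ∈ domz w) :
    0 < zfun w μ :=
  lt_of_lt_of_le (zsummand_pos w hw μ ((0, 0) : ℕ × ℕ))
    (Summable.le_tsum hμ ((0, 0) : ℕ × ℕ) (fun k _ => (zsummand_pos w hw μ k).le))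

lemma press_shift_le (w : ℕ × ℕ → ℝ) (hw : ∀ k, 0 < w k) {μ : ℝ × ℝ} (hμ : μ ∈ domz w)
    {δ : ℝ} (hδ : 0 < δ) : press w ((μ.1 - δ, μ.2 - δ) : ℝ × ℝ) ≤ press w μ := by
  have hD := shift_mem_Dmu w hw hμ hδ
  have hz : ((μ.1 - δ, μ.2 - δ) : ℝ × ℝ) ∈ domz w := Dmu_subset_domz w hw hD
  have hle : zfun w ((μ.1 - δ, μ.2 - δ) : ℝ × ℝ) ≤ zfun w μ := by
    apply Summable.tsum_le_tsum _ hz hμ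
    intro k
    simp only [zsummand, dotNat]
    have : (μ.1 - δ) * k.1 + (μ.2 - δ) * k.2 ≤ μ.1 * k.1 + μ.2 * k.2 := by
      have h1 : (0 : ℝ) ≤ k.1 := Nat.cast_nonneg _
      have h2 : (0 : ℝ) ≤ k.2 := Nat.cast_nonneg _
      nlinarith
    exact mul_le_mul_of_nonneg_left (Real.exp_le_exp.mpr this) (hw k).le
  exact Real.log_le_log (zfun_pos w hw hz) hle

/-- Let `ρ_c ∈ ∂D_ρ` with `μ_c = M̄(ρ_c)` (so `R(μ_c) = ρ_c` and `μ_c`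
is the unique maximizer of `μ ↦ ρ_c·μ - p(μ)` on `D_μ`), and suppose `μ_c ∈ ∂(dom z)`.
Then for every `ρ ∈ (0,∞)²`: `μ_c` maximizes `μ ↦ ρ·μ - p(μ)` over `D_μ` (i.e.
`M̄(ρ) = μ_c`) iff `ρ` belongs to the subgradient of `p` at `μ_c`. -/
theorem statement15 (w : ℕ × ℕ → ℝ) (hw : ∀ k, 0 < w k) (hexp : ExpBounded w)
    (ρc μc : ℝ × ℝ) (hρc1 : 0 < ρc.1) (hρc2 : 0 < ρc.2)
    (hμcD : μc ∈ Dmu w)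
    (hR : Rmap w μc = ρc)
    (hmax : ∀ μ ∈ Dmu w, dotR ρc μ - press w μ ≤ dotR ρc μc - press w μc)
    (huniq : ∀ μ' ∈ Dmu w,
      (∀ μ ∈ Dmu w, dotR ρc μ - press w μ ≤ dotR ρc μ' - press w μ') → μ' = μc)
    (hfr : μc ∈ frontier (domz w)) :
    ∀ ρ : ℝ × ℝ, 0 < ρ.1 → 0 < ρ.2 →
      ((∀ μ ∈ Dmu w, dotR ρ μ - press w μ ≤ dotR ρ μc - press w μc) ↔
        (∀ μ ∈ domz w, press w μc + dotR ρ (μ - μc) ≤ press w μ)) := by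
  intro ρ hρ1 hρ2
  constructor
  · intro h μ hμ
    have key : dotR ρ μ - press w μ ≤ dotR ρ μc - press w μc := by
      apply le_of_forall_pos_le_add
      intro ε hε
      set δ := ε / (ρ.1 + ρ.2) with hδdef
      have hρsum : 0 < ρ.1 + ρ.2 := by linarith
      have hδ : 0 < δ := div_pos hε hρsum
      have hD := shift_mem_Dmu w hw hμ hδ
      have h1 := h _ hD
      have hp := press_shift_le w hw hμ hδ
      have hdot : dotR ρ ((μ.1 - δ, μ.2 - δ) : ℝ × ℝ) = dotR ρ μ - ε := by
        simp only [dotR]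
        have : δ * (ρ.1 + ρ.2) = ε := div_mul_cancel₀ ε (ne_of_gt hρsum)
        nlinarith
      rw [hdot] at h1
      linarith
    have hsub : dotR ρ (μ - μc) = dotR ρ μ - dotR ρ μc := by
      simp only [dotR, Prod.fst_sub, Prod.snd_sub]
      ring
    rw [hsub]
    linarith [key]
  · intro h μ hμ
    have hμz := Dmu_subset_domz w hw hμ
    have := h μ hμz
    have hsub : dotR ρ (μ - μc) = dotR ρ μ - dotR ρ μc := by
      simp only [dotR, Prod.fst_sub, Prod.snd_sub]
      ring
    rw [hsub] at this
    linarith
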